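/- arXiv:2207.01961 — 6 statements merged into one kernel-verified Lean document; each statement's English description precedes it below -/
import Mathlib

section
/- If β > θ and 0 < c < (β + θ - 2√(βθ))/r, then both roots u₁ = (β - rc - θ - √D)/(2cθ) and u₂ = (β - rc - θ + √D)/(2cθ) of cθu² - (β-rc-θ)u + r = 0, where D = (β-rc-θ)² - 4crθ, are real, distinct, and positive. -/
theorem stmt_4 (c β r θ : ℝ) (hc : 0 < c) (hβ : 0 < β) (hr : 0 < r) (hθ : 0 < θ)
    (hβθ : β > θ) (hcc : c < (β + θ - 2 * Real.sqrt (β * θ)) / r) :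
    let D := (β - r * c - θ) ^ 2 - 4 * c * r * θ
    let u₁ := (β - r * c - θ - Real.sqrt D) / (2 * c * θ)
    let u₂ := (β - r * c - θ + Real.sqrt D) / (2 * c * θ)
    0 < D ∧ u₁ ≠ u₂ ∧ 0 < u₁ ∧ 0 < u₂ ∧
    c * θ * u₁ ^ 2 - (β - r * c - θ) * u₁ + r = 0 ∧
    c * θ * u₂ ^ 2 - (β - r * c - θ) * u₂ + r = 0 := by
  intro D u₁ u₂
  set s := Real.sqrt (β * θ) with hs_def
  have hs0 : 0 ≤ s := Real.sqrt_nonneg _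
  have hs2 : s ^ 2 = β * θ := Real.sq_sqrt (by positivity)
  have hsθ : θ < s := by nlinarith [sq_nonneg (s - θ)]
  have hx : r * c < β + θ - 2 * s := by
    have := (lt_div_iff₀ hr).mp hcc
    nlinarith
  have hD : 0 < D := by
    have h1 : 0 < β + θ - 2 * s - r * c := by linarith
    have h2 : 0 < β + θ + 2 * s - r * c := by nlinarith
    have : D = (β + θ - 2 * s - r * c) * (β + θ + 2 * s - r * c) := by
      simp only [D]; nlinarith
    rw [this]; positivity
  have hA : 0 < β - r * c - θ := by nlinarith
  have hsD0 : 0 ≤ Real.sqrt D := Real.sqrt_nonneg _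
  have hsD2 : Real.sqrt D ^ 2 = D := Real.sq_sqrt hD.le
  have hsDpos : 0 < Real.sqrt D := Real.sqrt_pos.mpr hD
  have hsDA : Real.sqrt D < β - r * c - θ := by
    have h1 : D < (β - r * c - θ) ^ 2 := by
      simp only [D]; nlinarith [mul_pos (mul_pos hc hr) hθ]
    nlinarith [hsD2, hsD0, hA]
  have h2cθ : 0 < 2 * c * θ := by positivity
  refine ⟨hD, ?_, ?_, ?_, ?_, ?_⟩
  · simp only [u₁, u₂]
    have : (β - r * c - θ - Real.sqrt D) / (2 * c * θ) < (β - r * c - θ + Real.sqrt D) / (2 * c * θ) := by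
      exact (div_lt_div_iff_of_pos_right h2cθ).mpr (by linarith)
    exact ne_of_lt this
  · simp only [u₁]
    exact div_pos (by linarith) h2cθ
  · simp only [u₂]; positivity
  · have hsD2' : Real.sqrt D ^ 2 = (β - r * c - θ) ^ 2 - 4 * c * r * θ := hsD2
    simp only [u₁]
    field_simp
    linear_combination hsD2'
  · have hsD2' : Real.sqrt D ^ 2 = (β - r * c - θ) ^ 2 - 4 * c * r * θ := hsD2
    simp only [u₂]
    field_simp
    linear_combination hsD2'
end

section
/- If β > (r+θ)²/θ and c = (β + θ - 2√(βθ))/r, then the quadratic cθu² - (β-rc-θ)u + r = 0 has a unique (double) root ū = r/(√θ(√β - √θ)), and 0 < ū < 1. -/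
theorem stmt_5 (c β r θ : ℝ) (hc : 0 < c) (hβ : 0 < β) (hr : 0 < r) (hθ : 0 < θ)
    (hβθ : β > (r + θ) ^ 2 / θ) (hcc : c = (β + θ - 2 * Real.sqrt (β * θ)) / r) :
    let ubar := r / (Real.sqrt θ * (Real.sqrt β - Real.sqrt θ))
    c * θ * ubar ^ 2 - (β - r * c - θ) * ubar + r = 0 ∧
    (∀ u : ℝ, c * θ * u ^ 2 - (β - r * c - θ) * u + r = 0 → u = ubar) ∧
    0 < ubar ∧ ubar < 1 := by
  intro ubar
  set s := Real.sqrt β with hsdef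
  set t := Real.sqrt θ with htdef
  have hs : s ^ 2 = β := Real.sq_sqrt hβ.le
  have ht : t ^ 2 = θ := Real.sq_sqrt hθ.le
  have hspos : 0 < s := Real.sqrt_pos.mpr hβ
  have htpos : 0 < t := Real.sqrt_pos.mpr hθ
  have hsqrtβθ : Real.sqrt (β * θ) = s * t := Real.sqrt_mul hβ.le θ
  have hst : r + θ < s * t := by
    have h1 : (r + θ) ^ 2 < β * θ := by
      have h2 := (div_lt_iff₀ hθ).mp hβθ
      nlinarith
    have h3 := Real.sqrt_lt_sqrt (by positivity) h1
    rwa [Real.sqrt_sq (by positivity), hsqrtβθ] at h3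
  have hden : r < t * (s - t) := by nlinarith
  have hdpos : 0 < t * (s - t) := lt_trans hr hden
  have hcr : c * r = (s - t) ^ 2 := by
    rw [hcc, hsqrtβθ]
    field_simp
    nlinarith
  have hc' : c = (s - t) ^ 2 / r := by
    rw [eq_div_iff hr.ne']; exact hcr
  have hid : ∀ u : ℝ, c * θ * u ^ 2 - (β - r * c - θ) * u + r
      = c * θ * (u - ubar) ^ 2 := by
    intro u
    have hub : ubar = r / (t * (s - t)) := rfl
    rw [hub, hc', ← hs, ← ht]
    have hne : s - t ≠ 0 := by intro h; rw [h, mul_zero] at hdpos; exact lt_irrefl 0 hdpos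
    field_simp
    ring
  refine ⟨by rw [hid]; simp, ?_, ?_, ?_⟩
  · intro u hu
    rw [hid] at hu
    have hcθ : 0 < c * θ := by positivity
    have h0 : (u - ubar) ^ 2 = 0 := by
      rcases mul_eq_zero.mp hu with h | h
      · exact absurd h hcθ.ne'
      · exact h
    have := pow_eq_zero_iff (n := 2) (by norm_num) |>.mp h0
    linarith [sub_eq_zero.mp this]
  · exact div_pos hr hdpos
  · exact (div_lt_one hdpos).mpr hden
end

section
/- If r + θ < β and 0 < c < (β - r - θ)/(r + θ), then the quadratic cθu² - (β-rc-θ)u + r = 0 has two real roots u₁ < u₂ with 0 < u₁ < 1 < u₂. -/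
theorem quad_roots_aux (a b r : ℝ) (ha : 0 < a) (hr : 0 < r) (hb1 : a + r < b) :
    ∃ u₁ u₂ : ℝ,
      a * u₁ ^ 2 - b * u₁ + r = 0 ∧
      a * u₂ ^ 2 - b * u₂ + r = 0 ∧
      u₁ < u₂ ∧ 0 < u₁ ∧ u₁ < 1 ∧ 1 < u₂ := by
  have hDnn : 0 ≤ b ^ 2 - 4 * a * r := by nlinarith [sq_nonneg (a - r)]
  obtain ⟨s, hs0, hs2⟩ : ∃ s : ℝ, 0 ≤ s ∧ s ^ 2 = b ^ 2 - 4 * a * r :=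
    ⟨Real.sqrt _, Real.sqrt_nonneg _, Real.sq_sqrt hDnn⟩
  have hsgt1 : a - r < s := by nlinarith [sq_nonneg (s - (a - r)), sq_nonneg (s + (a - r))]
  have hsgt2 : r - a < s := by nlinarith [sq_nonneg (s - (r - a)), sq_nonneg (s + (r - a))]
  have hspos : 0 < s := by rcases le_total a r with h | h <;> linarith
  have hsb : s < b := by nlinarith
  have h2a : (0:ℝ) < 2 * a := by linarith
  refine ⟨(b - s) / (2 * a), (b + s) / (2 * a), ?_, ?_, ?_, ?_, ?_, ?_⟩
  · field_simp
    nlinarith [hs2]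
  · field_simp
    nlinarith [hs2]
  · rw [div_lt_div_iff₀ h2a h2a]; nlinarith
  · exact div_pos (by linarith) h2a
  · rw [div_lt_one h2a]; nlinarith
  · rw [lt_div_iff₀ h2a]; linarith

theorem stmt_7 (c β r θ : ℝ) (hc : 0 < c) (hβ : 0 < β) (hr : 0 < r) (hθ : 0 < θ)
    (hβθ : r + θ < β) (hcc : c < (β - r - θ) / (r + θ)) :
    ∃ u₁ u₂ : ℝ,
      c * θ * u₁ ^ 2 - (β - r * c - θ) * u₁ + r = 0 ∧
      c * θ * u₂ ^ 2 - (β - r * c - θ) * u₂ + r = 0 ∧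
      u₁ < u₂ ∧ 0 < u₁ ∧ u₁ < 1 ∧ 1 < u₂ := by
  have hrθ : 0 < r + θ := by linarith
  have hcc' : c * (r + θ) < β - r - θ := (lt_div_iff₀ hrθ).mp hcc
  exact quad_roots_aux (c * θ) (β - r * c - θ) r (mul_pos hc hθ) hr (by nlinarith)
end

section
/- If β > (r+θ)²/θ and (β - r - θ)/(r + θ) < c < (β + θ - 2√(βθ))/r, then both roots of cθu² - (β-rc-θ)u + r = 0 are real, distinct, and lie in the open interval (0,1). -/
lemma quad_root_aux (A b r s : ℝ) (hA : A ≠ 0) (hs : s ^ 2 = b ^ 2 - 4 * A * r) :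
    A * ((b + s) / (2 * A)) ^ 2 - b * ((b + s) / (2 * A)) + r = 0 := by
  field_simp
  linear_combination hs

theorem stmt_8 (c β r θ : ℝ) (hc : 0 < c) (hβ : 0 < β) (hr : 0 < r) (hθ : 0 < θ)
    (hβθ : β > (r + θ) ^ 2 / θ)
    (hc1 : (β - r - θ) / (r + θ) < c) (hc2 : c < (β + θ - 2 * Real.sqrt (β * θ)) / r) :
    ∃ u₁ u₂ : ℝ,
      c * θ * u₁ ^ 2 - (β - r * c - θ) * u₁ + r = 0 ∧
      c * θ * u₂ ^ 2 - (β - r * c - θ) * u₂ + r = 0 ∧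
      u₁ ≠ u₂ ∧ 0 < u₁ ∧ u₁ < 1 ∧ 0 < u₂ ∧ u₂ < 1 := by
  have hrθ : 0 < r + θ := by linarith
  have hβθ' : θ * β > (r + θ) ^ 2 := by
    rw [gt_iff_lt, div_lt_iff₀ hθ] at hβθ; linarith [hβθ]
  have hc1' : β - r - θ < c * (r + θ) := by
    rw [div_lt_iff₀ hrθ] at hc1; linarith
  have hcθ : r < c * θ := by nlinarith
  set q := Real.sqrt (β * θ) with hq
  have hq2 : q ^ 2 = β * θ := Real.sq_sqrt (by positivity)
  have hqθ : θ < q := by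
    have : θ ^ 2 < β * θ := by nlinarith
    nlinarith [Real.sqrt_nonneg (β * θ)]
  have hc2' : c * r < β + θ - 2 * q := by
    rw [lt_div_iff₀ hr] at hc2; linarith
  set b := β - r * c - θ with hbdef
  have hb : 2 * q - 2 * θ < b := by simp only [hbdef]; nlinarith
  have hb0 : 0 < b := by linarith
  have hD : 0 < b ^ 2 - 4 * (c * θ) * r := by nlinarith
  set s := Real.sqrt (b ^ 2 - 4 * (c * θ) * r) with hs
  have hs2 : s ^ 2 = b ^ 2 - 4 * (c * θ) * r := Real.sq_sqrt (le_of_lt hD)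
  have hs0 : 0 < s := Real.sqrt_pos.mpr hD
  have hsb : s < b := by nlinarith
  have hf1 : 0 < c * θ + r - b := by simp only [hbdef]; nlinarith
  have hslt : s < 2 * (c * θ) - b := by nlinarith
  have hcθ0 : (0:ℝ) < 2 * (c * θ) := by positivity
  have hA : c * θ ≠ 0 := by positivity
  have e1 := quad_root_aux (c * θ) b r (-s) hA (by rw [neg_pow]; simpa using hs2)
  have e2 := quad_root_aux (c * θ) b r s hA hs2
  refine ⟨(b + -s) / (2 * (c * θ)), (b + s) / (2 * (c * θ)), e1, e2, ?_, ?_, ?_, ?_, ?_⟩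
  · intro h
    rw [div_eq_div_iff (ne_of_gt hcθ0) (ne_of_gt hcθ0)] at h
    have : b + -s = b + s := mul_right_cancel₀ (ne_of_gt hcθ0) h
    linarith
  · apply div_pos; linarith; exact hcθ0
  · rw [div_lt_one hcθ0]; linarith
  · apply div_pos; linarith; exact hcθ0
  · rw [div_lt_one hcθ0]; linarith
end

section
/- With u* = (β - rc - θ - √((β-rc-θ)² - 4crθ))/(2cθ), if β > (r+θ)²/θ, (β-r-θ)/(r+θ) < c < (√β - √θ)²/r, and 0 < u* < 1, then β/(1+cu*)² - θ > 0; equivalently F(1, u*) = u*(1-u*)(β/(1+cu*)² - θ) > 0. -/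
set_option maxHeartbeats 1600000 in
theorem stmt_16 (c β r θ : ℝ) (hc : 0 < c) (hβ : 0 < β) (hr : 0 < r) (hθ : 0 < θ)
    (hβθ : β > (r + θ) ^ 2 / θ)
    (hc1 : (β - r - θ) / (r + θ) < c)
    (hc2 : c < (Real.sqrt β - Real.sqrt θ) ^ 2 / r) :
    let u := (β - r * c - θ - Real.sqrt ((β - r * c - θ) ^ 2 - 4 * c * r * θ)) / (2 * c * θ)
    0 < u → u < 1 →
      β / (1 + c * u) ^ 2 - θ > 0 ∧ u * (1 - u) * (β / (1 + c * u) ^ 2 - θ) > 0 := by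
  intro u hu0 hu1
  have hu : u = (β - r * c - θ - Real.sqrt ((β - r * c - θ) ^ 2 - 4 * c * r * θ)) / (2 * c * θ) :=
    rfl
  clear_value u
  have hθβ : (r + θ) ^ 2 < θ * β := by
    rw [gt_iff_lt, div_lt_iff₀ hθ] at hβθ; linarith
  have hβθ' : θ < β := by nlinarith
  have hsqθ : Real.sqrt θ ^ 2 = θ := Real.sq_sqrt hθ.le
  have hsqβ : Real.sqrt β ^ 2 = β := Real.sq_sqrt hβ.le
  have hsθpos : 0 < Real.sqrt θ := Real.sqrt_pos.mpr hθ
  have hsb : Real.sqrt θ < Real.sqrt β := Real.sqrt_lt_sqrt hθ.le hβθ'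
  have ht : 0 < Real.sqrt β - Real.sqrt θ := sub_pos.mpr hsb
  have hrc : r * c < (Real.sqrt β - Real.sqrt θ) ^ 2 := by
    rw [lt_div_iff₀ hr] at hc2; nlinarith
  set A := β - r * c - θ with hA
  have hArc : 2 * Real.sqrt θ * (Real.sqrt β - Real.sqrt θ) < A := by
    rw [hA]; nlinarith
  have h2t : 0 < 2 * Real.sqrt θ * (Real.sqrt β - Real.sqrt θ) := by positivity
  have hApos : 0 < A := lt_trans h2t hArc
  have hA2 : 4 * θ * (Real.sqrt β - Real.sqrt θ) ^ 2 < A ^ 2 := by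
    nlinarith [mul_pos (sub_pos.mpr hArc) (by linarith : (0:ℝ) < A + 2 * Real.sqrt θ * (Real.sqrt β - Real.sqrt θ))]
  have hDpos : 0 < A ^ 2 - 4 * c * r * θ := by nlinarith [mul_lt_mul_of_pos_left hrc hθ]
  set s := Real.sqrt (A ^ 2 - 4 * c * r * θ) with hsdef
  have hs2 : s ^ 2 = A ^ 2 - 4 * c * r * θ := Real.sq_sqrt hDpos.le
  have hspos : 0 < s := Real.sqrt_pos.mpr hDpos
  clear_value A s
  have hsA : s < A := by
    have h := Real.sqrt_lt_sqrt hDpos.le (by nlinarith [mul_pos (mul_pos hc hr) hθ] : A ^ 2 - 4 * c * r * θ < A ^ 2)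
    rwa [Real.sqrt_sq hApos.le, ← hsdef] at h
  have hcu : 1 + c * u = (A + 2 * θ - s) / (2 * θ) := by
    rw [hu]; field_simp; ring
  have hkey : (A + 2 * θ - s) ^ 2 < 4 * θ * β := by nlinarith
  have hcupos : 0 < 1 + c * u := by nlinarith [mul_pos hc hu0]
  have hP : 0 < (1 + c * u) ^ 2 := by positivity
  have hmain : θ * (1 + c * u) ^ 2 < β := by
    rw [hcu, div_pow, ← mul_div_assoc, div_lt_iff₀ (by positivity : (0:ℝ) < (2 * θ) ^ 2)]
    nlinarith
  have h1 : β / (1 + c * u) ^ 2 - θ > 0 := by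
    rw [gt_iff_lt, sub_pos, lt_div_iff₀ hP]
    linarith [hmain]
  exact ⟨h1, mul_pos (mul_pos hu0 (by linarith)) h1⟩
end

section
/- With u** = (β - rc - θ + √((β-rc-θ)² - 4crθ))/(2cθ), if β > (r+θ)²/θ, (β-r-θ)/(r+θ) < c < (√β - √θ)²/r (so that 0 < u** < 1), then β/(1+cu**)² - θ < 0, hence F(1, u**) = u**(1-u**)(β/(1+cu**)² - θ) < 0 and the characteristic equation at (u**, v**) has a real root greater than 1. -/
set_option maxHeartbeats 1600000 in
theorem stmt_17 (c β r θ : ℝ) (hc : 0 < c) (hβ : 0 < β) (hr : 0 < r) (hθ : 0 < θ)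
    (hβθ : β > (r + θ) ^ 2 / θ)
    (hc1 : (β - r - θ) / (r + θ) < c)
    (hc2 : c < (Real.sqrt β - Real.sqrt θ) ^ 2 / r) :
    let u := (β - r * c - θ + Real.sqrt ((β - r * c - θ) ^ 2 - 4 * c * r * θ)) / (2 * c * θ)
    let F : ℝ → ℝ → ℝ := fun lam w =>
      ((1 - w) * (1 + 2 * c * w) / (1 + c * w) - lam) * (1 - lam) +
        w * (1 - w) * (β / (1 + c * w) ^ 2 - θ)
    β / (1 + c * u) ^ 2 - θ < 0 ∧ F 1 u < 0 ∧ ∃ lam : ℝ, 1 < lam ∧ F lam u = 0 := by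
  intro u F
  have hu : u = (β - r * c - θ + Real.sqrt ((β - r * c - θ) ^ 2 - 4 * c * r * θ)) / (2 * c * θ) :=
    rfl
  clear_value u
  have hct : 0 < c * θ := mul_pos hc hθ
  have hsb : 0 < Real.sqrt β := Real.sqrt_pos.mpr hβ
  have hst : 0 < Real.sqrt θ := Real.sqrt_pos.mpr hθ
  have hb2 : Real.sqrt β ^ 2 = β := Real.sq_sqrt hβ.le
  have ht2 : Real.sqrt θ ^ 2 = θ := Real.sq_sqrt hθ.le
  have hbt : (r + θ) ^ 2 < β * θ := (div_lt_iff₀ hθ).mp hβθ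
  have hrc : c * r < (Real.sqrt β - Real.sqrt θ) ^ 2 := (lt_div_iff₀ hr).mp hc2
  have h1 : r + θ < Real.sqrt β * Real.sqrt θ := by
    nlinarith [mul_pos hsb hst, hr, hθ]
  have hw : 0 < Real.sqrt β - Real.sqrt θ := by nlinarith
  set A := β - r * c - θ with hAdef
  have hA1 : 2 * Real.sqrt θ * (Real.sqrt β - Real.sqrt θ) < A := by
    rw [hAdef]; nlinarith
  have hAr : 2 * r < A := by nlinarith [mul_pos hst hw]
  have hA0 : 0 < A := by linarith
  have hD : 0 < A ^ 2 - 4 * c * r * θ := by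
    nlinarith [mul_pos hst hw, mul_pos (mul_pos hst hst) hw]
  set s := Real.sqrt (A ^ 2 - 4 * c * r * θ) with hsdef
  have hs0 : 0 ≤ s := Real.sqrt_nonneg _
  have hs2 : s ^ 2 = A ^ 2 - 4 * c * r * θ := Real.sq_sqrt hD.le
  have hkey : 2 * (c * θ) * u = A + s := by
    rw [hu]; field_simp
  have hArc : A < r + c * θ := by
    have := (div_lt_iff₀ (by linarith : (0:ℝ) < r + θ)).mp hc1
    rw [hAdef]; nlinarith
  have hA2c : A < 2 * (c * θ) := by linarith
  have hslt : s < 2 * (c * θ) - A := by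
    have hp : 0 < (c * θ) * (r + c * θ - A) := mul_pos hct (by linarith)
    have hq2 : (2 * (c * θ) - A) ^ 2 - (A ^ 2 - 4 * c * r * θ) =
        4 * ((c * θ) * (r + c * θ - A)) := by ring
    rw [hsdef, Real.sqrt_lt' (by linarith : (0:ℝ) < 2 * (c * θ) - A)]
    linarith
  -- clean up the context: no more square roots needed except s (opaque)
  clear_value s
  clear hu hsdef hβθ hc1 hc2 hsb hst hb2 ht2 hbt hrc h1 hw hA1
  have hu0 : 0 < u := by nlinarith [hkey, hct, hA0, hs0]
  have hu1 : u < 1 := by nlinarith [hkey, hct, hslt]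
  have hse : 2 * (c * θ) * u - A = s := by linarith
  have hq : c * θ * u ^ 2 - A * u + r = 0 := by
    have e2 : 4 * (c * θ) * (c * θ * u ^ 2 - A * u + r) = 0 := by
      linear_combination (2 * (c * θ) * u - A + s) * hse + hs2
    have h4 : (4 : ℝ) * (c * θ) ≠ 0 := by positivity
    exact (mul_eq_zero.mp e2).resolve_left h4
  have eAu : 2 * (c * θ) * (A * u) = A ^ 2 + A * s := by
    linear_combination A * hkey
  have hAu : 2 * r < A * u := by
    nlinarith [eAu, hD, mul_nonneg hA0.le hs0, hct]
  have hcu2 : r < c * θ * u ^ 2 := by linarith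
  have hcu : 0 < 1 + c * u := by nlinarith [mul_pos hc hu0]
  have hβlt : β < θ * (1 + c * u) ^ 2 := by
    have e2 : θ * (1 + c * u) ^ 2 * u - β * u =
        (1 + c * u) * (c * θ * u ^ 2 - r) + (c * θ * u ^ 2 - A * u + r) := by
      rw [hAdef]; ring
    have h3 : 0 < (1 + c * u) * (c * θ * u ^ 2 - r) :=
      mul_pos hcu (by linarith)
    have h4 : 0 < θ * (1 + c * u) ^ 2 * u - β * u := by linarith
    nlinarith [h4, hu0]
  have g1 : β / (1 + c * u) ^ 2 - θ < 0 := by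
    have h2 : (0:ℝ) < (1 + c * u) ^ 2 := by positivity
    have := (div_lt_iff₀ h2).mpr (by nlinarith : β < θ * (1 + c * u) ^ 2)
    linarith
  have g2 : F 1 u < 0 := by
    show ((1 - u) * (1 + 2 * c * u) / (1 + c * u) - 1) * (1 - 1) +
        u * (1 - u) * (β / (1 + c * u) ^ 2 - θ) < 0
    have e : ((1 - u) * (1 + 2 * c * u) / (1 + c * u) - 1) * (1 - 1) +
        u * (1 - u) * (β / (1 + c * u) ^ 2 - θ) =
        u * (1 - u) * (β / (1 + c * u) ^ 2 - θ) := by ring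
    rw [e]
    exact mul_neg_of_pos_of_neg (mul_pos hu0 (by linarith)) g1
  refine ⟨g1, g2, ?_⟩
  set M := (1 - u) * (1 + 2 * c * u) / (1 + c * u) with hMdef
  set K := u * (1 - u) * (β / (1 + c * u) ^ 2 - θ) with hKdef
  have hK : K < 0 := mul_neg_of_pos_of_neg (mul_pos hu0 (by linarith)) g1
  have hΔ : 0 < (M - 1) ^ 2 - 4 * K := by nlinarith [sq_nonneg (M - 1)]
  set t := Real.sqrt ((M - 1) ^ 2 - 4 * K) with htdef
  have ht0 : 0 < t := Real.sqrt_pos.mpr hΔ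
  have htsq : t ^ 2 = (M - 1) ^ 2 - 4 * K := Real.sq_sqrt hΔ.le
  have hFeq : ∀ lam : ℝ, F lam u = (M - lam) * (1 - lam) + K := fun lam => rfl
  clear_value t M K
  refine ⟨(M + 1 + t) / 2, ?_, ?_⟩
  · nlinarith [ht0, htsq, hK]
  · rw [hFeq]
    linear_combination htsq / 4
end
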